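/- arXiv:2401.10456 — 7 statements merged into one kernel-verified Lean document; each statement's English description precedes it below -/
import Mathlib

section
/- Let a > 0 be real, λ ∈ ℂ with λ ≠ 0 and λ² + a² ≠ 0, and ω ∈ ℂ with Re ω > 0, ω ≠ a, and ω² = λ + a² + a²/λ. Set E(x) := (1/(2ω)) ∫₀^∞ e^{−ω|x−y|} e^{−a y} dy for x ≥ 0. Then E(0) = 1/(2ω(ω+a)) ≠ 0, and for every x ≥ 0: E(x)/E(0) = (2ωλ(ω+a)/(λ²+a²)) e^{−a x} − (λ(ω+a)²/(λ²+a²)) e^{−ω x}; moreover −e^{−ω x} + E(x)/E(0) = (2ωλ(ω+a)/(λ²+a²)) (e^{−a x} − e^{−ω x}). -/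
/-!
Splitting the integral at `y = x`, the kernel `e^{-ω|x-y|} e^{-ay}` is a single exponential on
each piece, so `2ω E(x) = (e^{-ax} - e^{-ωx})/(ω - a) + e^{-ax}/(ω + a)`; in particular
`E(0) = 1/(2ω(ω+a))`. Normalising by `E(0)` leaves the factor `(ω+a)/(ω-a)`, which the symbol
relation `(ω - a)(ω + a)λ = λ² + a²` turns into `λ(ω+a)²/(λ²+a²)`. The same relation gives
`2ωλ(ω+a)/(λ²+a²) = 1 + λ(ω+a)²/(λ²+a²)`, which is the last identity.
-/

open MeasureTheory Set Complex

section ExpKernel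

variable {ω b : ℂ} {x : ℝ}

lemma setIntegral_Ioc_cexp_neg_mul_abs_sub_mul_cexp (hωb : ω ≠ b) (hx : 0 ≤ x) :
    ∫ y in Ioc 0 x, cexp (-ω * ((|x - y| : ℝ) : ℂ)) * cexp (-b * y)
      = (cexp (-b * x) - cexp (-ω * x)) / (ω - b) := by
  have hfactor : EqOn (fun y : ℝ => cexp (-ω * ((|x - y| : ℝ) : ℂ)) * cexp (-b * y))
      (fun y : ℝ => cexp (-ω * x) * cexp ((ω - b) * y)) (Ioc 0 x) := by
    intro y hy
    simp only [abs_of_nonneg (sub_nonneg.mpr hy.2), ← Complex.exp_add]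
    push_cast
    ring_nf
  rw [setIntegral_congr_fun measurableSet_Ioc hfactor, integral_const_mul,
    ← intervalIntegral.integral_of_le hx, integral_exp_mul_complex (sub_ne_zero.mpr hωb),
    ofReal_zero, mul_zero, Complex.exp_zero, mul_div_assoc', mul_sub, mul_one, ← Complex.exp_add]
  ring_nf

lemma eqOn_Ioi_cexp_neg_mul_abs_sub_mul_cexp :
    EqOn (fun y : ℝ => cexp (-ω * ((|x - y| : ℝ) : ℂ)) * cexp (-b * y))
      (fun y : ℝ => cexp (ω * x) * cexp (-(ω + b) * y)) (Ioi x) := by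
  intro y hy
  simp only [abs_of_neg (sub_neg.mpr (mem_Ioi.mp hy)), ← Complex.exp_add]
  push_cast
  ring_nf

lemma integrableOn_Ioi_cexp_neg_mul_abs_sub_mul_cexp (hre : 0 < (ω + b).re) :
    IntegrableOn (fun y : ℝ => cexp (-ω * ((|x - y| : ℝ) : ℂ)) * cexp (-b * y)) (Ioi x) := by
  have hdecay : IntegrableOn (fun y : ℝ => cexp (-(ω + b) * y)) (Ioi x) :=
    integrableOn_exp_mul_complex_Ioi (by rw [neg_re]; exact neg_neg_of_pos hre) x
  exact IntegrableOn.congr_fun (hdecay.const_mul _) eqOn_Ioi_cexp_neg_mul_abs_sub_mul_cexp.symm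
    measurableSet_Ioi

lemma setIntegral_Ioi_cexp_neg_mul_abs_sub_mul_cexp (hre : 0 < (ω + b).re) :
    ∫ y in Ioi x, cexp (-ω * ((|x - y| : ℝ) : ℂ)) * cexp (-b * y)
      = cexp (-b * x) / (ω + b) := by
  have hdecay : (-(ω + b)).re < 0 := by rw [neg_re]; exact neg_neg_of_pos hre
  rw [setIntegral_congr_fun measurableSet_Ioi eqOn_Ioi_cexp_neg_mul_abs_sub_mul_cexp,
    integral_const_mul, integral_exp_mul_complex_Ioi hdecay, neg_div_neg_eq, mul_div_assoc',
    ← Complex.exp_add]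
  ring_nf

lemma setIntegral_Ioi_zero_cexp_neg_mul_abs_sub_mul_cexp (hωb : ω ≠ b)
    (hre : 0 < (ω + b).re) (hx : 0 ≤ x) :
    ∫ y in Ioi 0, cexp (-ω * ((|x - y| : ℝ) : ℂ)) * cexp (-b * y)
      = (cexp (-b * x) - cexp (-ω * x)) / (ω - b) + cexp (-b * x) / (ω + b) := by
  have hcont : Continuous fun y : ℝ => cexp (-ω * ((|x - y| : ℝ) : ℂ)) * cexp (-b * y) := by
    fun_prop
  rw [← Ioc_union_Ioi_eq_Ioi hx, setIntegral_union (Ioc_disjoint_Ioi le_rfl) measurableSet_Ioi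
      hcont.integrableOn_Ioc (integrableOn_Ioi_cexp_neg_mul_abs_sub_mul_cexp hre),
    setIntegral_Ioc_cexp_neg_mul_abs_sub_mul_cexp hωb hx,
    setIntegral_Ioi_cexp_neg_mul_abs_sub_mul_cexp hre]

end ExpKernel

section Symbol

variable {ω a lam : ℂ}

lemma sub_mul_add_mul_eq_of_sq_eq (hlam : lam ≠ 0) (h : ω ^ 2 = lam + a ^ 2 + a ^ 2 / lam) :
    (ω - a) * (ω + a) * lam = lam ^ 2 + a ^ 2 := by
  field_simp at h
  linear_combination h

lemma add_div_sub_eq_of_sub_mul_add_mul_eq (hkey : (ω - a) * (ω + a) * lam = lam ^ 2 + a ^ 2)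
    (hD : lam ^ 2 + a ^ 2 ≠ 0) (hωa : ω - a ≠ 0) :
    (ω + a) / (ω - a) = lam * (ω + a) ^ 2 / (lam ^ 2 + a ^ 2) := by
  rw [div_eq_div_iff hωa hD]
  linear_combination -(ω + a) * hkey

lemma two_mul_div_eq_one_add_div_of_sub_mul_add_mul_eq
    (hkey : (ω - a) * (ω + a) * lam = lam ^ 2 + a ^ 2) (hD : lam ^ 2 + a ^ 2 ≠ 0) :
    2 * ω * lam * (ω + a) / (lam ^ 2 + a ^ 2) = 1 + lam * (ω + a) ^ 2 / (lam ^ 2 + a ^ 2) := by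
  rw [one_add_div hD]
  congr 1
  linear_combination hkey

end Symbol

/-- With `a > 0` real, `λ ∈ ℂ`, `λ ≠ 0`, `λ² + a² ≠ 0`, and `ω ∈ ℂ` with
`Re ω > 0`, `ω ≠ a`, `ω² = λ + a² + a²/λ`, the function
`E(x) = (1/(2ω)) ∫₀^∞ e^{-ω|x-y|} e^{-ay} dy` satisfies
`E(0) = 1/(2ω(ω+a)) ≠ 0`, and for `x ≥ 0`,
`E(x)/E(0) = (2ωλ(ω+a)/(λ²+a²)) e^{-ax} - (λ(ω+a)²/(λ²+a²)) e^{-ωx}`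
and `-e^{-ωx} + E(x)/E(0) = (2ωλ(ω+a)/(λ²+a²)) (e^{-ax} - e^{-ωx})`. -/
theorem stmt_2 (a : ℝ) (ha : 0 < a) (lam : ℂ) (hlam : lam ≠ 0)
    (hlam2 : lam ^ 2 + (a : ℂ) ^ 2 ≠ 0)
    (ω : ℂ) (hω : 0 < ω.re) (hωa : ω ≠ (a : ℂ))
    (hω2 : ω ^ 2 = lam + (a : ℂ) ^ 2 + (a : ℂ) ^ 2 / lam)
    (E : ℝ → ℂ)
    (hE : ∀ x : ℝ, E x = (1 / (2 * ω)) * ∫ y in Set.Ioi (0 : ℝ),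
      Complex.exp (-ω * ((|x - y| : ℝ) : ℂ)) * Complex.exp (-(a : ℂ) * (y : ℂ))) :
    E 0 = 1 / (2 * ω * (ω + (a : ℂ))) ∧ E 0 ≠ 0 ∧
    (∀ x : ℝ, 0 ≤ x →
      E x / E 0 = (2 * ω * lam * (ω + (a : ℂ)) / (lam ^ 2 + (a : ℂ) ^ 2))
            * Complex.exp (-(a : ℂ) * (x : ℂ))
          - (lam * (ω + (a : ℂ)) ^ 2 / (lam ^ 2 + (a : ℂ) ^ 2))
            * Complex.exp (-ω * (x : ℂ))) ∧
    (∀ x : ℝ, 0 ≤ x →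
      -Complex.exp (-ω * (x : ℂ)) + E x / E 0
        = (2 * ω * lam * (ω + (a : ℂ)) / (lam ^ 2 + (a : ℂ) ^ 2))
            * (Complex.exp (-(a : ℂ) * (x : ℂ)) - Complex.exp (-ω * (x : ℂ)))) := by
  have hω0 : ω ≠ 0 := by rintro rfl; simp at hω
  have hre : 0 < (ω + a).re := by rw [add_re, ofReal_re]; linarith
  have hωp : ω + a ≠ 0 := by rintro h; simp [h] at hre
  have hωm : ω - a ≠ 0 := sub_ne_zero.mpr hωa
  have hkey := sub_mul_add_mul_eq_of_sq_eq hlam hω2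
  have hEx (x : ℝ) (hx : 0 ≤ x) : E x = 1 / (2 * ω) *
      ((cexp (-a * x) - cexp (-ω * x)) / (ω - a) + cexp (-a * x) / (ω + a)) := by
    rw [hE, setIntegral_Ioi_zero_cexp_neg_mul_abs_sub_mul_cexp hωa hre hx]
  have hE0 : E 0 = 1 / (2 * ω * (ω + a)) := by
    rw [hEx 0 le_rfl]
    field_simp
    simp
  have hratio (x : ℝ) (hx : 0 ≤ x) : E x / E 0
      = 2 * ω * lam * (ω + a) / (lam ^ 2 + a ^ 2) * cexp (-a * x)
        - lam * (ω + a) ^ 2 / (lam ^ 2 + a ^ 2) * cexp (-ω * x) := by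
    have hsplit : E x / E 0 = (ω + a) / (ω - a) * (cexp (-a * x) - cexp (-ω * x))
        + cexp (-a * x) := by
      rw [hEx x hx, hE0]
      field_simp
    rw [hsplit, add_div_sub_eq_of_sub_mul_add_mul_eq hkey hlam2 hωm,
      two_mul_div_eq_one_add_div_of_sub_mul_add_mul_eq hkey hlam2]
    ring
  refine ⟨hE0, by rw [hE0]; simp [hω0, hωp], hratio, fun x hx => ?_⟩
  rw [hratio x hx, two_mul_div_eq_one_add_div_of_sub_mul_add_mul_eq hkey hlam2]
  ring
end

section
/- Let ξ = (ξ₁, ξ₂) ∈ ℝ² with ξ₁ ≠ 0 and |ξ₁| ≥ |ξ|². Then 4ξ₁² > |ξ|⁴, the quantity |λ₊ − λ₋| = √(4ξ₁² − |ξ|⁴) satisfies |λ₊ − λ₋| ≥ √3 · |ξ|², and for every t ≥ 0: |λ₊ e^{λ₊ t}|/|λ₊ − λ₋| ≤ (1/√3) e^{−|ξ|² t/2}, |λ₋ e^{λ₋ t}|/|λ₊ − λ₋| ≤ (1/√3) e^{−|ξ|² t/2}, and |(λ₋ e^{λ₋ t} − λ₊ e^{λ₊ t})/(λ₊ − λ₋)|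 ≤ (2/√3) e^{−|ξ|² t/2}. -/
/-- `λ₊ = -|ξ|²/2 + (i/2)√(4ξ₁² - |ξ|⁴)` if `|ξ|⁴ ≤ 4ξ₁²`, and
`λ₊ = -|ξ|²/2 + (1/2)√(|ξ|⁴ - 4ξ₁²)` otherwise. -/
noncomputable def lamPlus (ξ₁ ξ₂ : ℝ) : ℂ :=
  if (ξ₁ ^ 2 + ξ₂ ^ 2) ^ 2 ≤ 4 * ξ₁ ^ 2 then
    ((-(ξ₁ ^ 2 + ξ₂ ^ 2) / 2 : ℝ) : ℂ)
      + (Complex.I / 2) * ((Real.sqrt (4 * ξ₁ ^ 2 - (ξ₁ ^ 2 + ξ₂ ^ 2) ^ 2) : ℝ) : ℂ)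
  else
    ((-(ξ₁ ^ 2 + ξ₂ ^ 2) / 2 : ℝ) : ℂ)
      + (1 / 2 : ℂ) * ((Real.sqrt ((ξ₁ ^ 2 + ξ₂ ^ 2) ^ 2 - 4 * ξ₁ ^ 2) : ℝ) : ℂ)

/-- `λ₋ = -|ξ|²/2 - (i/2)√(4ξ₁² - |ξ|⁴)` if `|ξ|⁴ ≤ 4ξ₁²`, and
`λ₋ = -|ξ|²/2 - (1/2)√(|ξ|⁴ - 4ξ₁²)` otherwise. -/
noncomputable def lamMinus (ξ₁ ξ₂ : ℝ) : ℂ :=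
  if (ξ₁ ^ 2 + ξ₂ ^ 2) ^ 2 ≤ 4 * ξ₁ ^ 2 then
    ((-(ξ₁ ^ 2 + ξ₂ ^ 2) / 2 : ℝ) : ℂ)
      - (Complex.I / 2) * ((Real.sqrt (4 * ξ₁ ^ 2 - (ξ₁ ^ 2 + ξ₂ ^ 2) ^ 2) : ℝ) : ℂ)
  else
    ((-(ξ₁ ^ 2 + ξ₂ ^ 2) / 2 : ℝ) : ℂ)
      - (1 / 2 : ℂ) * ((Real.sqrt ((ξ₁ ^ 2 + ξ₂ ^ 2) ^ 2 - 4 * ξ₁ ^ 2) : ℝ) : ℂ)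

/-- If `ξ₁ ≠ 0` and `|ξ₁| ≥ |ξ|²`, then `4ξ₁² > |ξ|⁴`,
`|λ₊ - λ₋| = √(4ξ₁² - |ξ|⁴) ≥ √3 |ξ|²`, and for all `t ≥ 0` the quotients
`|λ± e^{λ± t}|/|λ₊ - λ₋|` are bounded by `(1/√3) e^{-|ξ|² t/2}` and
`|(λ₋ e^{λ₋ t} - λ₊ e^{λ₊ t})/(λ₊ - λ₋)| ≤ (2/√3) e^{-|ξ|² t/2}`. -/
theorem stmt_4 (ξ₁ ξ₂ : ℝ) (h0 : ξ₁ ≠ 0) (h1 : ξ₁ ^ 2 + ξ₂ ^ 2 ≤ |ξ₁|) :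
    (ξ₁ ^ 2 + ξ₂ ^ 2) ^ 2 < 4 * ξ₁ ^ 2 ∧
    ‖lamPlus ξ₁ ξ₂ - lamMinus ξ₁ ξ₂‖
      = Real.sqrt (4 * ξ₁ ^ 2 - (ξ₁ ^ 2 + ξ₂ ^ 2) ^ 2) ∧
    Real.sqrt 3 * (ξ₁ ^ 2 + ξ₂ ^ 2) ≤ ‖lamPlus ξ₁ ξ₂ - lamMinus ξ₁ ξ₂‖ ∧
    (∀ t : ℝ, 0 ≤ t →
      ‖lamPlus ξ₁ ξ₂ * Complex.exp (lamPlus ξ₁ ξ₂ * (t : ℂ))‖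
          / ‖lamPlus ξ₁ ξ₂ - lamMinus ξ₁ ξ₂‖
        ≤ (1 / Real.sqrt 3) * Real.exp (-(ξ₁ ^ 2 + ξ₂ ^ 2) * t / 2) ∧
      ‖lamMinus ξ₁ ξ₂ * Complex.exp (lamMinus ξ₁ ξ₂ * (t : ℂ))‖
          / ‖lamPlus ξ₁ ξ₂ - lamMinus ξ₁ ξ₂‖
        ≤ (1 / Real.sqrt 3) * Real.exp (-(ξ₁ ^ 2 + ξ₂ ^ 2) * t / 2) ∧
      ‖(lamMinus ξ₁ ξ₂ * Complex.exp (lamMinus ξ₁ ξ₂ * (t : ℂ))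
            - lamPlus ξ₁ ξ₂ * Complex.exp (lamPlus ξ₁ ξ₂ * (t : ℂ)))
          / (lamPlus ξ₁ ξ₂ - lamMinus ξ₁ ξ₂)‖
        ≤ (2 / Real.sqrt 3) * Real.exp (-(ξ₁ ^ 2 + ξ₂ ^ 2) * t / 2)) := by
  have hx2 : (0:ℝ) < ξ₁ ^ 2 := by positivity
  have hSpos : 0 < ξ₁ ^ 2 + ξ₂ ^ 2 := by positivity
  have hS1 : (ξ₁ ^ 2 + ξ₂ ^ 2) ^ 2 ≤ ξ₁ ^ 2 := by
    nlinarith [sq_abs ξ₁, abs_nonneg ξ₁]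
  have hlt : (ξ₁ ^ 2 + ξ₂ ^ 2) ^ 2 < 4 * ξ₁ ^ 2 := by nlinarith
  have hcond : (ξ₁ ^ 2 + ξ₂ ^ 2) ^ 2 ≤ 4 * ξ₁ ^ 2 := hlt.le
  set S := ξ₁ ^ 2 + ξ₂ ^ 2 with hSdef
  set D := 4 * ξ₁ ^ 2 - S ^ 2 with hDdef
  have hDpos : 0 < D := by simp only [hDdef]; linarith
  have hsqD : Real.sqrt D ^ 2 = D := Real.sq_sqrt hDpos.le
  have hsqrtDpos : 0 < Real.sqrt D := Real.sqrt_pos.mpr hDpos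
  have hP : lamPlus ξ₁ ξ₂
      = ((-S / 2 : ℝ) : ℂ) + (Complex.I / 2) * ((Real.sqrt D : ℝ) : ℂ) := by
    rw [lamPlus, if_pos hcond]
  have hM : lamMinus ξ₁ ξ₂
      = ((-S / 2 : ℝ) : ℂ) - (Complex.I / 2) * ((Real.sqrt D : ℝ) : ℂ) := by
    rw [lamMinus, if_pos hcond]
  have hdiff : lamPlus ξ₁ ξ₂ - lamMinus ξ₁ ξ₂ = Complex.I * ((Real.sqrt D : ℝ) : ℂ) := by
    rw [hP, hM]; ring
  have habsdiff : ‖lamPlus ξ₁ ξ₂ - lamMinus ξ₁ ξ₂‖ = Real.sqrt D := by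
    rw [hdiff, norm_mul, Complex.norm_I, one_mul, Complex.norm_real, Real.norm_eq_abs,
      abs_of_nonneg (Real.sqrt_nonneg _)]
  have hPre : (lamPlus ξ₁ ξ₂).re = -S / 2 := by simp [hP]
  have hPim : (lamPlus ξ₁ ξ₂).im = Real.sqrt D / 2 := by
    simp [hP, Complex.add_im, Complex.mul_im, Complex.div_im]
    ring
  have hMre : (lamMinus ξ₁ ξ₂).re = -S / 2 := by simp [hM]
  have hMim : (lamMinus ξ₁ ξ₂).im = -(Real.sqrt D / 2) := by
    simp [hM, Complex.sub_im, Complex.mul_im, Complex.div_im]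
    ring
  have habsP : ‖lamPlus ξ₁ ξ₂‖ = |ξ₁| := by
    have h2 : ‖lamPlus ξ₁ ξ₂‖ ^ 2 = ξ₁ ^ 2 := by
      rw [Complex.sq_norm, Complex.normSq_apply, hPre, hPim]
      simp only [hDdef] at hsqD
      linear_combination hsqD / 4
    have := Real.sqrt_sq (norm_nonneg (lamPlus ξ₁ ξ₂))
    rw [← this, h2, Real.sqrt_sq_eq_abs]
  have habsM : ‖lamMinus ξ₁ ξ₂‖ = |ξ₁| := by
    have h2 : ‖lamMinus ξ₁ ξ₂‖ ^ 2 = ξ₁ ^ 2 := by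
      rw [Complex.sq_norm, Complex.normSq_apply, hMre, hMim]
      simp only [hDdef] at hsqD
      linear_combination hsqD / 4
    have := Real.sqrt_sq (norm_nonneg (lamMinus ξ₁ ξ₂))
    rw [← this, h2, Real.sqrt_sq_eq_abs]
  have h3 : Real.sqrt 3 * S ≤ Real.sqrt D := by
    have e : Real.sqrt 3 * S = Real.sqrt (3 * S ^ 2) := by
      rw [Real.sqrt_mul (by norm_num), Real.sqrt_sq hSpos.le]
    rw [e]
    apply Real.sqrt_le_sqrt
    simp only [hDdef]; linarith [hS1]
  have h4 : Real.sqrt 3 * |ξ₁| ≤ Real.sqrt D := by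
    have e : Real.sqrt 3 * |ξ₁| = Real.sqrt (3 * ξ₁ ^ 2) := by
      rw [Real.sqrt_mul (by norm_num), Real.sqrt_sq_eq_abs]
    rw [e]
    apply Real.sqrt_le_sqrt
    simp only [hDdef]; linarith [hS1]
  have hsqrt3pos : (0:ℝ) < Real.sqrt 3 := Real.sqrt_pos.mpr (by norm_num)
  have hq : |ξ₁| / Real.sqrt D ≤ 1 / Real.sqrt 3 := by
    rw [div_le_div_iff₀ hsqrtDpos hsqrt3pos]
    linarith [h4, mul_comm |ξ₁| (Real.sqrt 3)]
  refine ⟨hlt, habsdiff, by rw [habsdiff]; exact h3, ?_⟩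
  intro t ht
  have hexpP : ‖Complex.exp (lamPlus ξ₁ ξ₂ * (t : ℂ))‖
      = Real.exp (-S * t / 2) := by
    rw [Complex.norm_exp]
    congr 1
    simp [Complex.mul_re, hPre]
    ring
  have hexpM : ‖Complex.exp (lamMinus ξ₁ ξ₂ * (t : ℂ))‖
      = Real.exp (-S * t / 2) := by
    rw [Complex.norm_exp]
    congr 1
    simp [Complex.mul_re, hMre]
    ring
  have hexppos : (0:ℝ) < Real.exp (-S * t / 2) := Real.exp_pos _
  have hbP : ‖lamPlus ξ₁ ξ₂ * Complex.exp (lamPlus ξ₁ ξ₂ * (t : ℂ))‖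
        / ‖lamPlus ξ₁ ξ₂ - lamMinus ξ₁ ξ₂‖
      ≤ (1 / Real.sqrt 3) * Real.exp (-S * t / 2) := by
    rw [norm_mul, habsP, hexpP, habsdiff, div_eq_mul_inv, mul_assoc, mul_comm (Real.exp _),
      ← mul_assoc, ← div_eq_mul_inv]
    exact mul_le_mul_of_nonneg_right hq hexppos.le
  have hbM : ‖lamMinus ξ₁ ξ₂ * Complex.exp (lamMinus ξ₁ ξ₂ * (t : ℂ))‖
        / ‖lamPlus ξ₁ ξ₂ - lamMinus ξ₁ ξ₂‖
      ≤ (1 / Real.sqrt 3) * Real.exp (-S * t / 2) := by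
    rw [norm_mul, habsM, hexpM, habsdiff, div_eq_mul_inv, mul_assoc, mul_comm (Real.exp _),
      ← mul_assoc, ← div_eq_mul_inv]
    exact mul_le_mul_of_nonneg_right hq hexppos.le
  refine ⟨hbP, hbM, ?_⟩
  rw [norm_div]
  have htri : ‖lamMinus ξ₁ ξ₂ * Complex.exp (lamMinus ξ₁ ξ₂ * (t : ℂ))
        - lamPlus ξ₁ ξ₂ * Complex.exp (lamPlus ξ₁ ξ₂ * (t : ℂ))‖
      ≤ ‖lamMinus ξ₁ ξ₂ * Complex.exp (lamMinus ξ₁ ξ₂ * (t : ℂ))‖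
        + ‖lamPlus ξ₁ ξ₂ * Complex.exp (lamPlus ξ₁ ξ₂ * (t : ℂ))‖ :=
    norm_sub_le _ _
  calc ‖lamMinus ξ₁ ξ₂ * Complex.exp (lamMinus ξ₁ ξ₂ * (t : ℂ))
        - lamPlus ξ₁ ξ₂ * Complex.exp (lamPlus ξ₁ ξ₂ * (t : ℂ))‖
        / ‖lamPlus ξ₁ ξ₂ - lamMinus ξ₁ ξ₂‖
      ≤ (‖lamMinus ξ₁ ξ₂ * Complex.exp (lamMinus ξ₁ ξ₂ * (t : ℂ))‖
        + ‖lamPlus ξ₁ ξ₂ * Complex.exp (lamPlus ξ₁ ξ₂ * (t : ℂ))‖)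
        / ‖lamPlus ξ₁ ξ₂ - lamMinus ξ₁ ξ₂‖ := by
        apply div_le_div_of_nonneg_right htri
        rw [habsdiff]; exact hsqrtDpos.le
    _ = ‖lamMinus ξ₁ ξ₂ * Complex.exp (lamMinus ξ₁ ξ₂ * (t : ℂ))‖
        / ‖lamPlus ξ₁ ξ₂ - lamMinus ξ₁ ξ₂‖
        + ‖lamPlus ξ₁ ξ₂ * Complex.exp (lamPlus ξ₁ ξ₂ * (t : ℂ))‖
        / ‖lamPlus ξ₁ ξ₂ - lamMinus ξ₁ ξ₂‖ := add_div _ _ _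
    _ ≤ (1 / Real.sqrt 3) * Real.exp (-S * t / 2)
        + (1 / Real.sqrt 3) * Real.exp (-S * t / 2) := add_le_add hbM hbP
    _ = (2 / Real.sqrt 3) * Real.exp (-S * t / 2) := by ring
end

section
/- There exists an absolute constant C > 0 such that for every ξ = (ξ₁, ξ₂) ∈ ℝ² satisfying |ξ|² < 2|ξ₁| and |ξ₁| ≤ |ξ|², and every t ≥ 0: |ξ₁ (e^{λ₋ t} − e^{λ₊ t})/(λ₊ − λ₋)| ≤ C e^{−|ξ|² t/4} and |(λ₋ e^{λ₋ t} − λ₊ e^{λ₊ t})/(λ₊ − λ₋)| ≤ C e^{−|ξ|² t/4}. -/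
open Complex

lemma norm_exp_sub_exp_le_of_re_eq {z w : ℂ} (h : z.re = w.re) :
    ‖exp z - exp w‖ ≤ ‖z - w‖ * Real.exp z.re := by
  have hzw : z - w = I * ((z - w).im : ℂ) := by
    apply Complex.ext <;> simp [h]
  calc ‖exp z - exp w‖ = ‖exp w‖ * ‖exp (z - w) - 1‖ := by
        rw [← norm_mul, mul_sub, ← exp_add, add_sub_cancel, mul_one]
    _ ≤ Real.exp z.re * ‖z - w‖ := by
        rw [norm_exp, ← h]
        gcongr
        rw [hzw, norm_mul, norm_I, one_mul, norm_real]
        exact Real.norm_exp_I_mul_ofReal_sub_one_le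
    _ = ‖z - w‖ * Real.exp z.re := mul_comm _ _

section DividedDifference

variable {μ ν : ℂ} {t : ℝ}

lemma norm_exp_mul_sub_exp_mul_div_sub_le (hre : μ.re = ν.re) (hne : μ ≠ ν) (ht : 0 ≤ t) :
    ‖(exp (ν * t) - exp (μ * t)) / (μ - ν)‖ ≤ t * Real.exp (μ.re * t) := by
  have hre' : (ν * t).re = (μ * t).re := by simp [hre]
  rw [norm_div, div_le_iff₀ (norm_pos_iff.mpr (sub_ne_zero.mpr hne))]
  calc ‖exp (ν * t) - exp (μ * t)‖ ≤ ‖ν * t - μ * t‖ * Real.exp (ν * t).re :=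
        norm_exp_sub_exp_le_of_re_eq hre'
    _ = t * Real.exp (μ.re * t) * ‖μ - ν‖ := by
        rw [hre', ← sub_mul, norm_mul, norm_sub_rev, Complex.norm_real, Real.norm_of_nonneg ht]
        simp only [mul_re, ofReal_re, ofReal_im, mul_zero, sub_zero]
        ring

lemma norm_mul_exp_mul_sub_mul_exp_mul_div_sub_le (hre : μ.re = ν.re) (hne : μ ≠ ν)
    (ht : 0 ≤ t) :
    ‖(ν * exp (ν * t) - μ * exp (μ * t)) / (μ - ν)‖ ≤ (‖ν‖ * t + 1) * Real.exp (μ.re * t) := by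
  have hsub : μ - ν ≠ 0 := sub_ne_zero.mpr hne
  have hsplit : (ν * exp (ν * t) - μ * exp (μ * t)) / (μ - ν)
      = ν * ((exp (ν * t) - exp (μ * t)) / (μ - ν)) - exp (μ * t) := by
    field_simp
    ring
  have hexp : ‖exp (μ * t)‖ = Real.exp (μ.re * t) := by simp [Complex.norm_exp]
  calc _ ≤ ‖ν‖ * ‖(exp (ν * t) - exp (μ * t)) / (μ - ν)‖ + ‖exp (μ * t)‖ := by
        rw [hsplit, ← norm_mul]; exact norm_sub_le _ _
    _ ≤ ‖ν‖ * (t * Real.exp (μ.re * t)) + Real.exp (μ.re * t) := by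
        rw [hexp]
        gcongr
        exact norm_exp_mul_sub_exp_mul_div_sub_le hre hne ht
    _ = (‖ν‖ * t + 1) * Real.exp (μ.re * t) := by ring

end DividedDifference

lemma add_one_mul_exp_neg_half_le (x : ℝ) : (x + 1) * Real.exp (-x / 2) ≤ 4 * Real.exp (-x / 4) := by
  have h : x + 1 ≤ 4 * Real.exp (x / 4) := by linarith [Real.add_one_le_exp (x / 4)]
  calc (x + 1) * Real.exp (-x / 2) ≤ 4 * Real.exp (x / 4) * Real.exp (-x / 2) := by gcongr
    _ = 4 * Real.exp (-x / 4) := by rw [mul_assoc, ← Real.exp_add]; ring_nf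

section Oscillatory

variable {ξ₁ ξ₂ : ℝ}

lemma lamPlus_re (h : (ξ₁ ^ 2 + ξ₂ ^ 2) ^ 2 ≤ 4 * ξ₁ ^ 2) :
    (lamPlus ξ₁ ξ₂).re = -(ξ₁ ^ 2 + ξ₂ ^ 2) / 2 := by
  rw [lamPlus, if_pos h, add_re, ofReal_re]
  simp

lemma lamMinus_re (h : (ξ₁ ^ 2 + ξ₂ ^ 2) ^ 2 ≤ 4 * ξ₁ ^ 2) :
    (lamMinus ξ₁ ξ₂).re = -(ξ₁ ^ 2 + ξ₂ ^ 2) / 2 := by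
  rw [lamMinus, if_pos h, sub_re, ofReal_re]
  simp

lemma lamMinus_im (h : (ξ₁ ^ 2 + ξ₂ ^ 2) ^ 2 ≤ 4 * ξ₁ ^ 2) :
    (lamMinus ξ₁ ξ₂).im = -Real.sqrt (4 * ξ₁ ^ 2 - (ξ₁ ^ 2 + ξ₂ ^ 2) ^ 2) / 2 := by
  rw [lamMinus, if_pos h, sub_im, ofReal_im]
  simp only [mul_im, div_ofNat_re, I_re, zero_div, ofReal_im, mul_zero, div_ofNat_im, I_im,
    ofReal_re, zero_add, zero_sub]
  ring

lemma lamPlus_sub_lamMinus (h : (ξ₁ ^ 2 + ξ₂ ^ 2) ^ 2 ≤ 4 * ξ₁ ^ 2) :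
    lamPlus ξ₁ ξ₂ - lamMinus ξ₁ ξ₂ = I * Real.sqrt (4 * ξ₁ ^ 2 - (ξ₁ ^ 2 + ξ₂ ^ 2) ^ 2) := by
  rw [lamPlus, lamMinus, if_pos h, if_pos h]
  ring

lemma norm_lamMinus (h : (ξ₁ ^ 2 + ξ₂ ^ 2) ^ 2 ≤ 4 * ξ₁ ^ 2) : ‖lamMinus ξ₁ ξ₂‖ = |ξ₁| := by
  refine (sq_eq_sq₀ (norm_nonneg _) (abs_nonneg _)).mp ?_
  rw [sq_abs, Complex.sq_norm, normSq_apply, lamMinus_re h, lamMinus_im h]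
  linear_combination Real.sq_sqrt (sub_nonneg.mpr h) / 4

end Oscillatory

/-- There is an absolute constant `C > 0` such that whenever `|ξ|² < 2|ξ₁|` and
`|ξ₁| ≤ |ξ|²`, for all `t ≥ 0`:
`|ξ₁ (e^{λ₋ t} - e^{λ₊ t})/(λ₊ - λ₋)| ≤ C e^{-|ξ|² t/4}` and
`|(λ₋ e^{λ₋ t} - λ₊ e^{λ₊ t})/(λ₊ - λ₋)| ≤ C e^{-|ξ|² t/4}`. -/
theorem stmt_5 : ∃ C : ℝ, 0 < C ∧ ∀ ξ₁ ξ₂ : ℝ,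
    ξ₁ ^ 2 + ξ₂ ^ 2 < 2 * |ξ₁| → |ξ₁| ≤ ξ₁ ^ 2 + ξ₂ ^ 2 → ∀ t : ℝ, 0 ≤ t →
    ‖(ξ₁ : ℂ) * (Complex.exp (lamMinus ξ₁ ξ₂ * (t : ℂ))
          - Complex.exp (lamPlus ξ₁ ξ₂ * (t : ℂ)))
        / (lamPlus ξ₁ ξ₂ - lamMinus ξ₁ ξ₂)‖
      ≤ C * Real.exp (-(ξ₁ ^ 2 + ξ₂ ^ 2) * t / 4) ∧
    ‖(lamMinus ξ₁ ξ₂ * Complex.exp (lamMinus ξ₁ ξ₂ * (t : ℂ))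
          - lamPlus ξ₁ ξ₂ * Complex.exp (lamPlus ξ₁ ξ₂ * (t : ℂ)))
        / (lamPlus ξ₁ ξ₂ - lamMinus ξ₁ ξ₂)‖
      ≤ C * Real.exp (-(ξ₁ ^ 2 + ξ₂ ^ 2) * t / 4) := by
  refine ⟨4, by norm_num, fun ξ₁ ξ₂ hlt hle t ht => ?_⟩
  set a := ξ₁ ^ 2 + ξ₂ ^ 2
  have hosc : a ^ 2 < 4 * ξ₁ ^ 2 := by
    have := pow_lt_pow_left₀ hlt (by positivity) two_ne_zero
    rwa [mul_pow, sq_abs, show (2 : ℝ) ^ 2 = 4 by norm_num] at this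
  have hne : lamPlus ξ₁ ξ₂ ≠ lamMinus ξ₁ ξ₂ := by
    rw [← sub_ne_zero, lamPlus_sub_lamMinus hosc.le]
    exact mul_ne_zero I_ne_zero (ofReal_ne_zero.mpr (Real.sqrt_pos.mpr (by linarith)).ne')
  have hre : (lamPlus ξ₁ ξ₂).re = (lamMinus ξ₁ ξ₂).re := by
    rw [lamPlus_re hosc.le, lamMinus_re hosc.le]
  have hdecay : (a * t + 1) * Real.exp ((lamPlus ξ₁ ξ₂).re * t) ≤ 4 * Real.exp (-a * t / 4) := by
    rw [lamPlus_re hosc.le]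
    convert add_one_mul_exp_neg_half_le (a * t) using 3 <;> ring
  have hξt : |ξ₁| * t ≤ a * t := mul_le_mul_of_nonneg_right hle ht
  constructor
  · rw [mul_div_assoc, norm_mul, norm_real, Real.norm_eq_abs]
    calc _ ≤ |ξ₁| * (t * Real.exp ((lamPlus ξ₁ ξ₂).re * t)) := by
          gcongr; exact norm_exp_mul_sub_exp_mul_div_sub_le hre hne ht
      _ ≤ (a * t + 1) * Real.exp ((lamPlus ξ₁ ξ₂).re * t) := by
          rw [← mul_assoc]
          exact mul_le_mul_of_nonneg_right (by linarith) (Real.exp_pos _).le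
      _ ≤ _ := hdecay
  · calc _ ≤ (‖lamMinus ξ₁ ξ₂‖ * t + 1) * Real.exp ((lamPlus ξ₁ ξ₂).re * t) :=
          norm_mul_exp_mul_sub_mul_exp_mul_div_sub_le hre hne ht
      _ ≤ (a * t + 1) * Real.exp ((lamPlus ξ₁ ξ₂).re * t) := by
          rw [norm_lamMinus hosc.le]; gcongr
      _ ≤ _ := hdecay
end

section
/- Let ξ = (ξ₁, ξ₂) ∈ ℝ² with ξ₁ ≠ 0 and 4ξ₁² ≤ |ξ|⁴/2. Then ξ₁²/|ξ|² ≤ η₋ ≤ √2 · ξ₁²/|ξ|², where η₋ := |ξ|²/2 − (1/2)√(|ξ|⁴ − 4ξ₁²). -/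
/-- If `ξ₁ ≠ 0` and `4ξ₁² ≤ |ξ|⁴/2`, then
`ξ₁²/|ξ|² ≤ η₋ ≤ √2 ξ₁²/|ξ|²`, where
`η₋ = |ξ|²/2 - (1/2)√(|ξ|⁴ - 4ξ₁²)`. -/
theorem stmt_6 (ξ₁ ξ₂ : ℝ) (h0 : ξ₁ ≠ 0)
    (h1 : 4 * ξ₁ ^ 2 ≤ (ξ₁ ^ 2 + ξ₂ ^ 2) ^ 2 / 2) :
    ξ₁ ^ 2 / (ξ₁ ^ 2 + ξ₂ ^ 2)
        ≤ (ξ₁ ^ 2 + ξ₂ ^ 2) / 2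
            - Real.sqrt ((ξ₁ ^ 2 + ξ₂ ^ 2) ^ 2 - 4 * ξ₁ ^ 2) / 2 ∧
    (ξ₁ ^ 2 + ξ₂ ^ 2) / 2 - Real.sqrt ((ξ₁ ^ 2 + ξ₂ ^ 2) ^ 2 - 4 * ξ₁ ^ 2) / 2
        ≤ Real.sqrt 2 * ξ₁ ^ 2 / (ξ₁ ^ 2 + ξ₂ ^ 2) := by
  set s : ℝ := ξ₁ ^ 2 + ξ₂ ^ 2 with hs_def
  have ha : 0 < ξ₁ ^ 2 := by positivity
  have hs : 0 < s := by positivity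
  clear_value s
  have h8 : 8 * ξ₁ ^ 2 ≤ s ^ 2 := by linarith
  have hsq2 : Real.sqrt 2 ^ 2 = 2 := Real.sq_sqrt (by norm_num)
  have hsq2gt : (1.25 : ℝ) ≤ Real.sqrt 2 := by
    nlinarith [Real.sqrt_nonneg 2, hsq2]
  constructor
  · -- lower bound: √(s²-4a) ≤ s - 2a/s
    have key : Real.sqrt (s ^ 2 - 4 * ξ₁ ^ 2) ≤ s - 2 * ξ₁ ^ 2 / s := by
      have hnn : 0 ≤ s - 2 * ξ₁ ^ 2 / s := by
        rw [sub_nonneg, div_le_iff₀ hs]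
        nlinarith
      have : s ^ 2 - 4 * ξ₁ ^ 2 ≤ (s - 2 * ξ₁ ^ 2 / s) ^ 2 := by
        have hexp : (s - 2 * ξ₁ ^ 2 / s) ^ 2
            = s ^ 2 - 4 * ξ₁ ^ 2 + 4 * ξ₁ ^ 4 / s ^ 2 := by
          field_simp
          ring
        rw [hexp]
        have : 0 ≤ 4 * ξ₁ ^ 4 / s ^ 2 := by positivity
        linarith
      calc Real.sqrt (s ^ 2 - 4 * ξ₁ ^ 2)
          ≤ Real.sqrt ((s - 2 * ξ₁ ^ 2 / s) ^ 2) := Real.sqrt_le_sqrt this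
        _ = s - 2 * ξ₁ ^ 2 / s := Real.sqrt_sq hnn
    have : ξ₁ ^ 2 / s = 2 * ξ₁ ^ 2 / s / 2 := by ring
    rw [this]
    linarith
  · -- upper bound: s - 2√2 a/s ≤ √(s²-4a)
    have key : s - 2 * Real.sqrt 2 * ξ₁ ^ 2 / s ≤ Real.sqrt (s ^ 2 - 4 * ξ₁ ^ 2) := by
      have hnn : 0 ≤ s - 2 * Real.sqrt 2 * ξ₁ ^ 2 / s := by
        rw [sub_nonneg, div_le_iff₀ hs]
        nlinarith [Real.sqrt_nonneg 2]
      rw [Real.le_sqrt hnn (by nlinarith)]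
      have hexp : (s - 2 * Real.sqrt 2 * ξ₁ ^ 2 / s) ^ 2
          = s ^ 2 - 4 * Real.sqrt 2 * ξ₁ ^ 2 + 8 * ξ₁ ^ 4 / s ^ 2 := by
        field_simp
        linear_combination (4 * ξ₁ ^ 4) * hsq2
      rw [hexp]
      have hkey : 8 * ξ₁ ^ 4 / s ^ 2 ≤ ξ₁ ^ 2 := by
        rw [div_le_iff₀ (by positivity)]
        nlinarith
      nlinarith
    have h2 : Real.sqrt 2 * ξ₁ ^ 2 / s = 2 * Real.sqrt 2 * ξ₁ ^ 2 / s / 2 := by ring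
    rw [h2]
    linarith
end

section
/- Let ξ = (ξ₁, ξ₂) ∈ ℝ² with ξ₁ ≠ 0 and 4ξ₁² ≤ |ξ|⁴/2, and let λ_± := −|ξ|²/2 ± (1/2)√(|ξ|⁴ − 4ξ₁²) (real numbers). Then ξ₁²/|ξ|⁴ ≤ |λ₊|/|λ₊ − λ₋| ≤ 2ξ₁²/|ξ|⁴ and (2 + √2)/4 ≤ |λ₋|/|λ₊ − λ₋| ≤ √2. -/
lemma aux_stmt11 (a m s : ℝ) (ha : 0 < a) (hm0 : 0 < m) (hs0 : 0 ≤ s)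
    (hs2 : s ^ 2 = m ^ 2 - 4 * a) (hsb : m ^ 2 ≤ 2 * s ^ 2) (hslt : s < m) :
    (a / m ^ 2 ≤ ((m - s) / 2) / s ∧ ((m - s) / 2) / s ≤ 2 * a / m ^ 2) ∧
    ((2 + Real.sqrt 2) / 4 ≤ ((m + s) / 2) / s ∧ ((m + s) / 2) / s ≤ Real.sqrt 2) := by
  have hspos : 0 < s := by nlinarith [sq_nonneg s]
  have hm2 : (0:ℝ) < m ^ 2 := by positivity
  have ha4 : a = (m ^ 2 - s ^ 2) / 4 := by linarith
  have h4 : Real.sqrt 4 = 2 := by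
    rw [show (4:ℝ) = 2 ^ 2 by norm_num]; exact Real.sqrt_sq (by norm_num)
  have h2le : Real.sqrt 2 ≤ 2 := (Real.sqrt_le_sqrt (by norm_num)).trans_eq h4
  have h1le : (1:ℝ) ≤ Real.sqrt 2 := by
    have := Real.sqrt_le_sqrt (show (1:ℝ) ≤ 2 by norm_num)
    rwa [Real.sqrt_one] at this
  refine ⟨⟨?_, ?_⟩, ?_, ?_⟩
  · rw [div_le_div_iff₀ hm2 hspos]
    have hid : (m - s) / 2 * m ^ 2 - a * s = (m - s) ^ 2 * (2 * m + s) / 4 := by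
      rw [ha4]; ring
    nlinarith [mul_nonneg (sq_nonneg (m - s)) (show (0:ℝ) ≤ 2 * m + s by linarith)]
  · rw [div_le_div_iff₀ hspos hm2]
    have hss : s * s = s ^ 2 := (sq s).symm
    have hsm : s * s ≤ s * m := mul_le_mul_of_nonneg_left hslt.le hs0
    have hpos2 : 0 ≤ s ^ 2 + s * m - m ^ 2 := by linarith
    have hid : 2 * a * s - (m - s) / 2 * m ^ 2 = (m - s) * (s ^ 2 + s * m - m ^ 2) / 2 := by
      rw [ha4]; ring
    nlinarith [mul_nonneg (sub_nonneg.2 hslt.le) hpos2]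
  · rw [div_le_div_iff₀ (by norm_num) hspos]
    have := mul_le_mul_of_nonneg_right h2le hs0
    linarith
  · rw [div_le_iff₀ hspos]
    have h2 : m ≤ Real.sqrt 2 * s := by
      have hme : m = Real.sqrt (m ^ 2) := (Real.sqrt_sq hm0.le).symm
      rw [hme]
      calc Real.sqrt (m ^ 2) ≤ Real.sqrt (2 * s ^ 2) := Real.sqrt_le_sqrt (by linarith)
        _ = Real.sqrt 2 * s := by rw [Real.sqrt_mul (by norm_num), Real.sqrt_sq hs0]
    have := mul_le_mul_of_nonneg_right h1le hs0
    linarith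

/-- If `ξ₁ ≠ 0` and `4ξ₁² ≤ |ξ|⁴/2`, then for the real roots
`λ_± = -|ξ|²/2 ± (1/2)√(|ξ|⁴ - 4ξ₁²)` of `λ² + |ξ|²λ + ξ₁² = 0`:
`ξ₁²/|ξ|⁴ ≤ |λ₊|/|λ₊ - λ₋| ≤ 2ξ₁²/|ξ|⁴` and
`(2 + √2)/4 ≤ |λ₋|/|λ₊ - λ₋| ≤ √2`. -/
theorem stmt_11 (ξ₁ ξ₂ : ℝ) (h0 : ξ₁ ≠ 0)
    (h1 : 4 * ξ₁ ^ 2 ≤ (ξ₁ ^ 2 + ξ₂ ^ 2) ^ 2 / 2) :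
    (ξ₁ ^ 2 / (ξ₁ ^ 2 + ξ₂ ^ 2) ^ 2
        ≤ |(-(ξ₁ ^ 2 + ξ₂ ^ 2) / 2
            + Real.sqrt ((ξ₁ ^ 2 + ξ₂ ^ 2) ^ 2 - 4 * ξ₁ ^ 2) / 2)|
          / |(-(ξ₁ ^ 2 + ξ₂ ^ 2) / 2
                + Real.sqrt ((ξ₁ ^ 2 + ξ₂ ^ 2) ^ 2 - 4 * ξ₁ ^ 2) / 2)
              - (-(ξ₁ ^ 2 + ξ₂ ^ 2) / 2
                - Real.sqrt ((ξ₁ ^ 2 + ξ₂ ^ 2) ^ 2 - 4 * ξ₁ ^ 2) / 2)| ∧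
      |(-(ξ₁ ^ 2 + ξ₂ ^ 2) / 2
            + Real.sqrt ((ξ₁ ^ 2 + ξ₂ ^ 2) ^ 2 - 4 * ξ₁ ^ 2) / 2)|
          / |(-(ξ₁ ^ 2 + ξ₂ ^ 2) / 2
                + Real.sqrt ((ξ₁ ^ 2 + ξ₂ ^ 2) ^ 2 - 4 * ξ₁ ^ 2) / 2)
              - (-(ξ₁ ^ 2 + ξ₂ ^ 2) / 2
                - Real.sqrt ((ξ₁ ^ 2 + ξ₂ ^ 2) ^ 2 - 4 * ξ₁ ^ 2) / 2)|
        ≤ 2 * ξ₁ ^ 2 / (ξ₁ ^ 2 + ξ₂ ^ 2) ^ 2) ∧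
    ((2 + Real.sqrt 2) / 4
        ≤ |(-(ξ₁ ^ 2 + ξ₂ ^ 2) / 2
            - Real.sqrt ((ξ₁ ^ 2 + ξ₂ ^ 2) ^ 2 - 4 * ξ₁ ^ 2) / 2)|
          / |(-(ξ₁ ^ 2 + ξ₂ ^ 2) / 2
                + Real.sqrt ((ξ₁ ^ 2 + ξ₂ ^ 2) ^ 2 - 4 * ξ₁ ^ 2) / 2)
              - (-(ξ₁ ^ 2 + ξ₂ ^ 2) / 2
                - Real.sqrt ((ξ₁ ^ 2 + ξ₂ ^ 2) ^ 2 - 4 * ξ₁ ^ 2) / 2)| ∧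
      |(-(ξ₁ ^ 2 + ξ₂ ^ 2) / 2
            - Real.sqrt ((ξ₁ ^ 2 + ξ₂ ^ 2) ^ 2 - 4 * ξ₁ ^ 2) / 2)|
          / |(-(ξ₁ ^ 2 + ξ₂ ^ 2) / 2
                + Real.sqrt ((ξ₁ ^ 2 + ξ₂ ^ 2) ^ 2 - 4 * ξ₁ ^ 2) / 2)
              - (-(ξ₁ ^ 2 + ξ₂ ^ 2) / 2
                - Real.sqrt ((ξ₁ ^ 2 + ξ₂ ^ 2) ^ 2 - 4 * ξ₁ ^ 2) / 2)|
        ≤ Real.sqrt 2) := by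
  have ha : 0 < ξ₁ ^ 2 := by positivity
  set m : ℝ := ξ₁ ^ 2 + ξ₂ ^ 2 with hm
  set s : ℝ := Real.sqrt (m ^ 2 - 4 * ξ₁ ^ 2) with hs
  have hm0 : 0 < m := by nlinarith [sq_nonneg ξ₂]
  have harg : (0:ℝ) ≤ m ^ 2 - 4 * ξ₁ ^ 2 := by nlinarith [sq_nonneg m]
  have hs2 : s ^ 2 = m ^ 2 - 4 * ξ₁ ^ 2 := Real.sq_sqrt harg
  have hs0 : 0 ≤ s := Real.sqrt_nonneg _
  have hslt : s < m := by nlinarith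
  have hsb : m ^ 2 ≤ 2 * s ^ 2 := by nlinarith
  have e1 : |(-m / 2 + s / 2)| = (m - s) / 2 := by
    rw [abs_of_nonpos (by linarith)]; ring
  have e2 : |(-m / 2 - s / 2)| = (m + s) / 2 := by
    rw [abs_of_nonpos (by linarith)]; ring
  have e3 : |(-m / 2 + s / 2) - (-m / 2 - s / 2)| = s := by
    rw [show (-m / 2 + s / 2) - (-m / 2 - s / 2) = s by ring, abs_of_nonneg hs0]
  rw [e1, e2, e3]
  exact aux_stmt11 (ξ₁ ^ 2) m s ha hm0 hs0 hs2 hsb hslt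
end

section
/- Let Ω := ℝ × (0, ∞), T > 0, and let u, b : ℝ × ℝ² → ℝ² be smooth functions satisfying the induction equation ∂ₜb − ∂₁u = −(u·∇)b + (b·∇)u on [0, T] × Ω (extended by continuity to the closure of Ω), together with the boundary conditions u(t, x₁, 0) = 0 and b₂(t, x₁, 0) = 0 for all x₁ ∈ ℝ, t ∈ [0, T]. Then ∂ₜ b₁(t, x₁, 0) = 0 for all t ∈ (0, T) and x₁ ∈ ℝ; consequently b₁(t, x₁, 0) = b₁(0, x₁, 0) for all t, and if b₁(0, x₁, 0) = 0 for every x₁, then b₁(t, x₁, 0) = 0 for every t ∈ [0, T] and x₁ ∈ ℝ. -/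
/-- Directional (partial) derivative of a function on `ℝ × ℝ² = ℝ × ℝ × ℝ`
(time and two spatial variables) in the direction `v`. -/
noncomputable def pd {E : Type*} [NormedAddCommGroup E] [NormedSpace ℝ E]
    (v : ℝ × ℝ × ℝ) (f : ℝ × ℝ × ℝ → E) (q : ℝ × ℝ × ℝ) : E :=
  fderiv ℝ f q v

/-- Tangential derivative of a function vanishing on the line `{x₂ = 0}` (with fixed `t`)
is zero in the direction `(0,1,0)`. -/
lemma tangential_zero (f : ℝ × ℝ × ℝ → ℝ × ℝ) (hf : ContDiff ℝ (⊤ : ℕ∞) f)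
    (t x₁ : ℝ) (h0 : ∀ y : ℝ, f (t, y, 0) = 0) :
    fderiv ℝ f (t, x₁, 0) (0, 1, 0) = 0 := by
  have hℓ : HasDerivAt (fun s : ℝ => ((t, x₁ + s, 0) : ℝ × ℝ × ℝ)) (0, 1, 0) 0 := by
    simpa using HasDerivAt.prodMk (hasDerivAt_const (0:ℝ) t)
      (HasDerivAt.prodMk ((hasDerivAt_id (0:ℝ)).const_add x₁) (hasDerivAt_const (0:ℝ) (0:ℝ)))
  have hcomp : HasDerivAt (fun s : ℝ => f (t, x₁ + s, 0))
      (fderiv ℝ f (t, x₁ + 0, 0) (0, 1, 0)) 0 :=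
    ((hf.differentiable (by simp) (t, x₁ + 0, 0)).hasFDerivAt).comp_hasDerivAt 0 hℓ
  have heq : (fun s : ℝ => f (t, x₁ + s, 0)) = fun _ : ℝ => (0 : ℝ × ℝ) := by
    funext s; exact h0 _
  rw [heq] at hcomp
  have := (hasDerivAt_const (0 : ℝ) ((0 : ℝ × ℝ))).unique hcomp
  simpa using this.symm

/-- If `u, b` are smooth and satisfy the induction equation
`∂ₜb - ∂₁u = -(u·∇)b + (b·∇)u` on `[0,T] × closure Ω` (i.e. for `x₂ ≥ 0`),
with `u(t, x₁, 0) = 0` and `b₂(t, x₁, 0) = 0`, then `∂ₜb₁(t, x₁, 0) = 0` on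
`(0,T)`; consequently `b₁(t, x₁, 0) = b₁(0, x₁, 0)` on `[0,T]`, and if
`b₁(0, ·, 0) = 0` then `b₁(t, ·, 0) = 0` for every `t ∈ [0,T]`. -/
theorem stmt_18 (T : ℝ) (hT : 0 < T)
    (u b : ℝ × ℝ × ℝ → ℝ × ℝ)
    (hu : ContDiff ℝ (⊤ : ℕ∞) u) (hb : ContDiff ℝ (⊤ : ℕ∞) b)
    -- induction equation on [0,T] × closure Ω
    (hind : ∀ t ∈ Set.Icc (0 : ℝ) T, ∀ x₁ x₂ : ℝ, 0 ≤ x₂ →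
      pd (1, 0, 0) b (t, x₁, x₂) - pd (0, 1, 0) u (t, x₁, x₂)
        = -((u (t, x₁, x₂)).1 • pd (0, 1, 0) b (t, x₁, x₂)
              + (u (t, x₁, x₂)).2 • pd (0, 0, 1) b (t, x₁, x₂))
          + ((b (t, x₁, x₂)).1 • pd (0, 1, 0) u (t, x₁, x₂)
              + (b (t, x₁, x₂)).2 • pd (0, 0, 1) u (t, x₁, x₂)))
    -- boundary conditions
    (hbcu : ∀ t ∈ Set.Icc (0 : ℝ) T, ∀ x₁ : ℝ, u (t, x₁, 0) = 0)
    (hbcb : ∀ t ∈ Set.Icc (0 : ℝ) T, ∀ x₁ : ℝ, (b (t, x₁, 0)).2 = 0) :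
    (∀ t ∈ Set.Ioo (0 : ℝ) T, ∀ x₁ : ℝ,
      deriv (fun s : ℝ => (b (s, x₁, 0)).1) t = 0) ∧
    (∀ t ∈ Set.Icc (0 : ℝ) T, ∀ x₁ : ℝ,
      (b (t, x₁, 0)).1 = (b (0, x₁, 0)).1) ∧
    ((∀ x₁ : ℝ, (b (0, x₁, 0)).1 = 0) →
      ∀ t ∈ Set.Icc (0 : ℝ) T, ∀ x₁ : ℝ, (b (t, x₁, 0)).1 = 0) := by
  -- Key: ∂ₜ b (t,x₁,0) = 0 for t ∈ [0,T]
  have key : ∀ t ∈ Set.Icc (0 : ℝ) T, ∀ x₁ : ℝ,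
      pd (1, 0, 0) b (t, x₁, 0) = 0 := by
    intro t ht x₁
    have hu0 : u (t, x₁, 0) = 0 := hbcu t ht x₁
    have hb2 : (b (t, x₁, 0)).2 = 0 := hbcb t ht x₁
    have htan : pd (0, 1, 0) u (t, x₁, 0) = 0 :=
      tangential_zero u hu t x₁ (fun y => hbcu t ht y)
    have h := hind t ht x₁ 0 le_rfl
    rw [hu0, hb2, htan] at h
    simpa using h
  -- full HasDerivAt with derivative 0 for t ∈ [0,T]
  have hderiv : ∀ t ∈ Set.Icc (0 : ℝ) T, ∀ x₁ : ℝ,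
      HasDerivAt (fun s : ℝ => (b (s, x₁, 0)).1) 0 t := by
    intro t ht x₁
    have hℓ : HasDerivAt (fun s : ℝ => ((s, x₁, 0) : ℝ × ℝ × ℝ)) (1, 0, 0) t :=
      HasDerivAt.prodMk (hasDerivAt_id t)
        (HasDerivAt.prodMk (hasDerivAt_const t x₁) (hasDerivAt_const t 0))
    have hcomp : HasDerivAt (fun s : ℝ => b (s, x₁, 0))
        (fderiv ℝ b (t, x₁, 0) (1, 0, 0)) t :=
      ((hb.differentiable (by simp) (t, x₁, 0)).hasFDerivAt).comp_hasDerivAt t hℓ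
    have h1 : HasDerivAt (fun s : ℝ => (b (s, x₁, 0)).1)
        (fderiv ℝ b (t, x₁, 0) (1, 0, 0)).1 t :=
      ((ContinuousLinearMap.fst ℝ ℝ ℝ).hasFDerivAt).comp_hasDerivAt t hcomp
    have h0 : (fderiv ℝ b (t, x₁, 0) (1, 0, 0)).1 = 0 := by
      have := key t ht x₁
      simp only [pd] at this
      rw [this]; rfl
    rwa [h0] at h1
  refine ⟨?_, ?_, ?_⟩
  · intro t ht x₁
    exact (hderiv t ⟨le_of_lt ht.1, le_of_lt ht.2⟩ x₁).deriv
  · intro t ht x₁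
    have hcont : ContinuousOn (fun s : ℝ => (b (s, x₁, 0)).1) (Set.Icc 0 T) := by
      apply Continuous.continuousOn
      exact (continuous_fst.comp (hb.continuous.comp
        (continuous_id.prodMk ((continuous_const).prodMk continuous_const))))
    exact constant_of_has_deriv_right_zero hcont
      (fun s hs => (hderiv s ⟨hs.1, le_of_lt hs.2⟩ x₁).hasDerivWithinAt) t ht
  · intro h0 t ht x₁
    have hcont : ContinuousOn (fun s : ℝ => (b (s, x₁, 0)).1) (Set.Icc 0 T) := by
      apply Continuous.continuousOn
      exact (continuous_fst.comp (hb.continuous.comp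
        (continuous_id.prodMk ((continuous_const).prodMk continuous_const))))
    have := constant_of_has_deriv_right_zero hcont
      (fun s hs => (hderiv s ⟨hs.1, le_of_lt hs.2⟩ x₁).hasDerivWithinAt) t ht
    rw [this, h0]
end

section
/- There is a constant C > 0 (one may take C = √2) such that for every continuously differentiable function b : ℝ² → ℝ with compact support: ( ∫_ℝ ( ∫₀^∞ |b(x₁, x₂) ∂₁b(x₁, x₂)| dx₂ )² dx₁ )^{1/2} ≤ C ( ∫_{ℝ×(0,∞)} |b|² dx )^{1/4} ( ∫_{ℝ×(0,∞)} |∂₁b|² dx )^{3/4}. -/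
/-!
Integrating `∂₁(b²) = 2 b ∂₁b` along horizontal lines gives the one-dimensional Agmon bound
`b(x₁, x₂)² ≤ 2 A(x₂)` with `A(x₂) = ∫ |b ∂₁b|(y, x₂) dy`, uniformly in `x₁`. For fixed `x₁`,
Cauchy–Schwarz in `x₂` and this bound give
`(∫ |b ∂₁b| dx₂)² ≤ (∫ 2A dx₂) (∫ (∂₁b)² dx₂)`, and integrating in `x₁` yields
`‖b ∂₁b‖²_{L²_{x₁}L¹_{x₂}} ≤ 2 ‖b ∂₁b‖_{L¹(Ω)} ‖∂₁b‖²_{L²(Ω)} ≤ 2 ‖b‖_{L²(Ω)} ‖∂₁b‖³_{L²(Ω)}`.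
-/

open MeasureTheory Set

theorem HasCompactSupport.comp_prodMkLeft {X Y M : Type*} [TopologicalSpace X]
    [TopologicalSpace Y] [T2Space X] [Zero M] {f : X × Y → M} (hf : HasCompactSupport f) (y : Y) :
    HasCompactSupport (fun x => f (x, y)) :=
  HasCompactSupport.intro (hf.isCompact.image continuous_fst) fun x hx =>
    image_eq_zero_of_notMem_tsupport fun hmem => hx ⟨(x, y), hmem, rfl⟩

theorem sq_le_two_mul_integral_abs_mul_deriv {f : ℝ → ℝ} (hf : ContDiff ℝ 1 f)
    (hfs : HasCompactSupport f) (x : ℝ) :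
    f x ^ 2 ≤ 2 * ∫ y, |f y * deriv f y| := by
  have hf2 : ContDiff ℝ 1 (fun y => f y ^ 2) := hf.pow 2
  have hf2s : HasCompactSupport (fun y => f y ^ 2) :=
    hfs.comp_left (g := (· ^ 2)) (zero_pow two_ne_zero)
  have hderiv : deriv (fun y => f y ^ 2) = fun y => 2 * (f y * deriv f y) := by
    ext y
    rw [deriv_fun_pow (hf.differentiable one_ne_zero y)]
    ring
  have hint : Integrable fun y => |deriv (fun y => f y ^ 2) y| :=
    ((hf2.continuous_deriv le_rfl).integrable_of_hasCompactSupport hf2s.deriv).abs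
  calc f x ^ 2 = ∫ y in Iic x, deriv (fun y => f y ^ 2) y :=
        (hf2s.integral_Iic_deriv_eq hf2 x).symm
    _ ≤ ∫ y in Iic x, |deriv (fun y => f y ^ 2) y| :=
        (le_abs_self _).trans abs_integral_le_integral_abs
    _ ≤ ∫ y, |deriv (fun y => f y ^ 2) y| :=
        setIntegral_le_integral hint (.of_forall fun _ => abs_nonneg _)
    _ = 2 * ∫ y, |f y * deriv f y| := by
        simp only [hderiv, abs_mul, abs_two, integral_const_mul]

theorem integral_abs_mul_le_sqrt_mul_sqrt {α : Type*} [MeasurableSpace α] {μ : Measure α}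
    {f g : α → ℝ} (hf : MemLp f 2 μ) (hg : MemLp g 2 μ) :
    ∫ a, |f a * g a| ∂μ ≤ √(∫ a, f a ^ 2 ∂μ) * √(∫ a, g a ^ 2 ∂μ) := by
  have := integral_mul_norm_le_Lp_mul_Lq Real.HolderConjugate.two_two
    (by simpa using hf) (by simpa using hg)
  simpa [Real.sqrt_eq_rpow, ← abs_mul] using this

theorem sq_integral_abs_mul_le {α : Type*} [MeasurableSpace α] {μ : Measure α}
    {f g : α → ℝ} (hf : MemLp f 2 μ) (hg : MemLp g 2 μ) :
    (∫ a, |f a * g a| ∂μ) ^ 2 ≤ (∫ a, f a ^ 2 ∂μ) * ∫ a, g a ^ 2 ∂μ := by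
  calc (∫ a, |f a * g a| ∂μ) ^ 2 ≤ (√(∫ a, f a ^ 2 ∂μ) * √(∫ a, g a ^ 2 ∂μ)) ^ 2 :=
        pow_le_pow_left₀ (integral_nonneg fun _ => abs_nonneg _)
          (integral_abs_mul_le_sqrt_mul_sqrt hf hg) 2
    _ = _ := by
        rw [mul_pow, Real.sq_sqrt (integral_nonneg fun _ => sq_nonneg _),
          Real.sq_sqrt (integral_nonneg fun _ => sq_nonneg _)]

section Product

variable {α β : Type*} [MeasurableSpace α] [MeasurableSpace β] {μ : Measure α} {ν : Measure β}
  [SFinite μ] [SFinite ν]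

theorem MeasureTheory.MemLp.two_prod_right_ae {F : α × β → ℝ} (hF : MemLp F 2 (μ.prod ν)) :
    ∀ᵐ x ∂μ, MemLp (fun y => F (x, y)) 2 ν := by
  have hF2 : Integrable (fun p => F p ^ 2) (μ.prod ν) := (memLp_two_iff_integrable_sq hF.1).1 hF
  filter_upwards [hF2.prod_right_ae, hF.1.prodMk_left] with x hx hmeas
  exact (memLp_two_iff_integrable_sq hmeas).2 hx

theorem integral_sq_integral_abs_mul_le {C : ℝ} (hC : 0 ≤ C) {F G : α × β → ℝ}
    (hF : MemLp F 2 (μ.prod ν)) (hG : MemLp G 2 (μ.prod ν))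
    (hFG : ∀ x y, F (x, y) ^ 2 ≤ C * ∫ x', |F (x', y) * G (x', y)| ∂μ) :
    ∫ x, (∫ y, |F (x, y) * G (x, y)| ∂ν) ^ 2 ∂μ ≤
      C * √(∫ p, F p ^ 2 ∂μ.prod ν) * √(∫ p, G p ^ 2 ∂μ.prod ν) * ∫ p, G p ^ 2 ∂μ.prod ν := by
  set K := C * √(∫ p, F p ^ 2 ∂μ.prod ν) * √(∫ p, G p ^ 2 ∂μ.prod ν)
  have hFG_int : Integrable (fun p => |F p * G p|) (μ.prod ν) := (hF.integrable_mul hG).abs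
  have hG2_int : Integrable (fun p => G p ^ 2) (μ.prod ν) :=
    (memLp_two_iff_integrable_sq hG.1).1 hG
  have hbound_int : Integrable (fun y => C * ∫ x', |F (x', y) * G (x', y)| ∂μ) ν :=
    hFG_int.integral_prod_right.const_mul C
  have hbound_le : ∫ y, C * ∫ x', |F (x', y) * G (x', y)| ∂μ ∂ν ≤ K := by
    rw [integral_const_mul, ← integral_prod_symm _ hFG_int,
      show K = C * (_ * _) from mul_assoc ..]
    exact mul_le_mul_of_nonneg_left (integral_abs_mul_le_sqrt_mul_sqrt hF hG) hC
  have hslice : ∀ᵐ x ∂μ,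
      (∫ y, |F (x, y) * G (x, y)| ∂ν) ^ 2 ≤ K * ∫ y, G (x, y) ^ 2 ∂ν := by
    filter_upwards [hF.two_prod_right_ae, hG.two_prod_right_ae] with x hFx hGx
    have hG2x : 0 ≤ ∫ y, G (x, y) ^ 2 ∂ν := integral_nonneg fun _ => sq_nonneg _
    calc (∫ y, |F (x, y) * G (x, y)| ∂ν) ^ 2
        ≤ (∫ y, F (x, y) ^ 2 ∂ν) * ∫ y, G (x, y) ^ 2 ∂ν := sq_integral_abs_mul_le hFx hGx
      _ ≤ (∫ y, C * ∫ x', |F (x', y) * G (x', y)| ∂μ ∂ν) * ∫ y, G (x, y) ^ 2 ∂ν := by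
          refine mul_le_mul_of_nonneg_right ?_ hG2x
          exact integral_mono_of_nonneg (.of_forall fun _ => sq_nonneg _) hbound_int
            (.of_forall (hFG x))
      _ ≤ K * ∫ y, G (x, y) ^ 2 ∂ν := mul_le_mul_of_nonneg_right hbound_le hG2x
  calc ∫ x, (∫ y, |F (x, y) * G (x, y)| ∂ν) ^ 2 ∂μ
      ≤ ∫ x, K * ∫ y, G (x, y) ^ 2 ∂ν ∂μ :=
        integral_mono_of_nonneg (.of_forall fun _ => sq_nonneg _)
          (hG2_int.integral_prod_left.const_mul K) hslice
    _ = K * ∫ p, G p ^ 2 ∂μ.prod ν := by rw [integral_const_mul, integral_prod _ hG2_int]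

end Product

theorem deriv_comp_prodMk_const {b : ℝ × ℝ → ℝ} (hb : Differentiable ℝ b) (x₂ y : ℝ) :
    deriv (fun t => b (t, x₂)) y = fderiv ℝ b (y, x₂) (1, 0) :=
  ((hb (y, x₂)).hasFDerivAt.comp_hasDerivAt y
    ((hasDerivAt_id y).prodMk (hasDerivAt_const y x₂))).deriv

theorem rpow_half_le_sqrt_mul_rpow_mul_rpow {X C P Q : ℝ} (hP : 0 ≤ P) (hQ : 0 ≤ Q)
    (h : X ≤ C * √P * √Q * Q) :
    X ^ (1 / 2 : ℝ) ≤ √C * P ^ (1 / 4 : ℝ) * Q ^ (3 / 4 : ℝ) := by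
  have hP4 : P ^ (1 / 4 : ℝ) = √√P := by
    rw [Real.sqrt_eq_rpow, Real.sqrt_eq_rpow, ← Real.rpow_mul hP]; norm_num
  have hQ4 : Q ^ (3 / 4 : ℝ) = √√Q * √Q := by
    rw [Real.sqrt_eq_rpow, Real.sqrt_eq_rpow, ← Real.rpow_mul hQ,
      ← Real.rpow_add' hQ (by norm_num)]
    norm_num
  rw [← Real.sqrt_eq_rpow, hP4, hQ4]
  calc √X ≤ √(C * √P * √Q * Q) := Real.sqrt_le_sqrt h
    _ = √C * √√P * (√√Q * √Q) := by
      rw [Real.sqrt_mul' _ hQ, Real.sqrt_mul' _ (Real.sqrt_nonneg Q),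
        Real.sqrt_mul' _ (Real.sqrt_nonneg P)]
      ring

/-- The anisotropic estimate `‖b ∂₁b‖_{L²_{x₁}L¹_{x₂}} ≤ √2 ‖b‖_{L²(Ω)}^{1/2}
‖∂₁b‖_{L²(Ω)}^{3/2}` for `C¹` compactly supported `b : ℝ² → ℝ`, where
`Ω = ℝ × (0,∞)` and `∂₁` is the derivative in the first variable. -/
theorem stmt_19 (b : ℝ × ℝ → ℝ) (hb : ContDiff ℝ 1 b)
    (hsupp : HasCompactSupport b) :
    (∫ x₁ : ℝ, (∫ x₂ in Set.Ioi (0 : ℝ),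
        |b (x₁, x₂) * fderiv ℝ b (x₁, x₂) (1, 0)|) ^ 2) ^ ((1 : ℝ) / 2)
      ≤ Real.sqrt 2
        * (∫ x in (Set.univ ×ˢ Set.Ioi (0 : ℝ) : Set (ℝ × ℝ)),
            (b x) ^ 2) ^ ((1 : ℝ) / 4)
        * (∫ x in (Set.univ ×ˢ Set.Ioi (0 : ℝ) : Set (ℝ × ℝ)),
            (fderiv ℝ b x (1, 0)) ^ 2) ^ ((3 : ℝ) / 4) := by
  set db : ℝ × ℝ → ℝ := fun x => fderiv ℝ b x (1, 0)
  have hΩ : (volume : Measure (ℝ × ℝ)).restrict (univ ×ˢ Ioi 0) =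
      (volume : Measure ℝ).prod (volume.restrict (Ioi 0)) := by
    rw [Measure.volume_eq_prod, ← Measure.prod_restrict, Measure.restrict_univ]
  have hb_L2 : MemLp b 2 ((volume : Measure ℝ).prod (volume.restrict (Ioi 0))) :=
    hΩ ▸ (hb.continuous.memLp_of_hasCompactSupport hsupp).restrict _
  have hdb_cont : Continuous db := (hb.continuous_fderiv one_ne_zero).clm_apply continuous_const
  have hdb_supp : HasCompactSupport db :=
    (hsupp.fderiv ℝ).comp_left (g := fun L : ℝ × ℝ →L[ℝ] ℝ => L (1, 0)) rfl
  have hdb_L2 : MemLp db 2 ((volume : Measure ℝ).prod (volume.restrict (Ioi 0))) :=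
    hΩ ▸ (hdb_cont.memLp_of_hasCompactSupport hdb_supp).restrict _
  have hagmon : ∀ x₁ x₂, b (x₁, x₂) ^ 2 ≤ 2 * ∫ y, |b (y, x₂) * db (y, x₂)| := fun x₁ x₂ => by
    simpa only [deriv_comp_prodMk_const (hb.differentiable one_ne_zero)] using
      sq_le_two_mul_integral_abs_mul_deriv (f := fun t => b (t, x₂))
        (hb.comp (contDiff_id.prodMk contDiff_const)) (hsupp.comp_prodMkLeft x₂) x₁
  rw [hΩ]
  exact rpow_half_le_sqrt_mul_rpow_mul_rpow (integral_nonneg fun _ => sq_nonneg _)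
    (integral_nonneg fun _ => sq_nonneg _)
    (integral_sq_integral_abs_mul_le zero_le_two hb_L2 hdb_L2 hagmon)
end
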